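/- arXiv:2103.10735 — 2 statements merged into one kernel-verified Lean document; each statement's English description precedes it below -/
import Mathlib

section
/- Let V : ℝ → ℝ be given by V(x) = x⁴ + 1 and u : ℝ → ℝ by u(x) = (x² + 1)⁻¹. Then V ∈ L¹_loc(ℝ) with essinf V ≥ 1 > 0, u ∈ H¹(ℝ), but V u² ∉ L¹(ℝ). -/
open MeasureTheory Filter

noncomputable section

lemma aux_hasDeriv (u : ℝ → ℝ) (hu : ∀ x, u x = (x ^ 2 + 1)⁻¹) (x : ℝ) :
    HasDerivAt u (-(2 * x) / (x ^ 2 + 1) ^ 2) x := by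
  have h0 : (x ^ 2 + 1 : ℝ) ≠ 0 := by positivity
  have h1 : HasDerivAt (fun y : ℝ => y ^ 2 + 1) (2 * x) x := by
    simpa using ((hasDerivAt_pow 2 x).add_const 1)
  have h2 := h1.inv h0
  have heq : u = fun y : ℝ => (y ^ 2 + 1)⁻¹ := funext hu
  rw [heq]
  exact h2.congr_deriv (by ring)

/-- For `V(x) = x⁴ + 1` and `u(x) = (x²+1)⁻¹` on `ℝ`:
`V ∈ L¹_loc(ℝ)` with `essinf V ≥ 1 > 0`, `u ∈ H¹(ℝ)`, but `Vu² ∉ L¹(ℝ)`. -/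
theorem statement8 (V u : ℝ → ℝ) (hV : ∀ x, V x = x ^ 4 + 1)
    (hu : ∀ x, u x = (x ^ 2 + 1)⁻¹) :
    LocallyIntegrable V volume ∧
    (∀ᵐ x ∂(volume : Measure ℝ), 1 ≤ V x) ∧
    -- `u ∈ H¹(ℝ)` : `u ∈ L²` and its distributional derivative is in `L²`
    MemLp u 2 volume ∧
    (∃ g : ℝ → ℝ, MemLp g 2 volume ∧ LocallyIntegrable g volume ∧
      ∀ φ : ℝ → ℝ, ContDiff ℝ (⊤ : ℕ∞) φ → HasCompactSupport φ →
        ∫ x, u x * deriv φ x = - ∫ x, g x * φ x) ∧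
    -- but `V u² ∉ L¹(ℝ)`
    ¬ Integrable (fun x => V x * u x ^ 2) volume := by
  have hVc : Continuous V := by
    have h : V = fun x => x ^ 4 + 1 := funext hV
    rw [h]; continuity
  have huc : Continuous u := by
    have h : u = fun x => (x ^ 2 + 1)⁻¹ := funext hu
    rw [h]
    exact Continuous.inv₀ (by continuity) (fun x => by positivity)
  set g : ℝ → ℝ := fun x => -(2 * x) / (x ^ 2 + 1) ^ 2 with hgdef
  have hgc : Continuous g := by
    apply Continuous.div (by continuity) (by continuity)
    intro x; positivity
  have hbase : Integrable (fun x : ℝ => 4 * (1 + x ^ 2)⁻¹) volume :=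
    integrable_inv_one_add_sq.const_mul 4
  refine ⟨hVc.locallyIntegrable, ?_, ?_, ⟨g, ?_, hgc.locallyIntegrable, ?_⟩, ?_⟩
  · filter_upwards with x
    rw [hV x]; nlinarith [sq_nonneg (x ^ 2)]
  · -- u ∈ L²
    rw [memLp_two_iff_integrable_sq huc.aestronglyMeasurable]
    apply hbase.mono ((huc.pow 2).aestronglyMeasurable)
    filter_upwards with x
    have h0 : (0:ℝ) < x ^ 2 + 1 := by positivity
    have h1 : (0:ℝ) < 1 + x ^ 2 := by positivity
    rw [Pi.pow_apply, hu x, Real.norm_eq_abs, Real.norm_eq_abs, abs_of_nonneg (by positivity),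
      abs_of_nonneg (by positivity), inv_pow, ← one_div, ← div_eq_mul_inv,
      div_le_div_iff₀ (by positivity) h1]
    nlinarith [sq_nonneg x, sq_nonneg (x ^ 2)]
  · -- g ∈ L²
    rw [memLp_two_iff_integrable_sq hgc.aestronglyMeasurable]
    apply hbase.mono ((hgc.pow 2).aestronglyMeasurable)
    filter_upwards with x
    have h1 : (0:ℝ) < 1 + x ^ 2 := by positivity
    rw [Pi.pow_apply, Real.norm_eq_abs, Real.norm_eq_abs,
      abs_of_nonneg (show (0:ℝ) ≤ g x ^ 2 from sq_nonneg _),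
      abs_of_nonneg (show (0:ℝ) ≤ 4 * (1 + x ^ 2)⁻¹ by positivity), hgdef]
    simp only [div_pow]
    rw [← div_eq_mul_inv, div_le_div_iff₀ (by positivity) h1]
    nlinarith [sq_nonneg x, sq_nonneg (x ^ 2), sq_nonneg (x ^ 3), sq_nonneg (x ^ 2 * x)]
  · -- weak derivative
    intro φ hφ hφc
    have hφ1 : ContDiff ℝ 1 φ := hφ.of_le (by simp)
    have hφcont : Continuous φ := hφ.continuous
    have hφ' : Continuous (deriv φ) := hφ.continuous_deriv (by simp)
    have hφ'c : HasCompactSupport (deriv φ) := hφc.deriv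
    set F : ℝ → ℝ := fun x => u x * φ x with hF
    have hFd : ∀ x, HasDerivAt F (g x * φ x + u x * deriv φ x) x := by
      intro x
      exact (aux_hasDeriv u hu x).mul (hφ1.differentiable one_ne_zero x).hasDerivAt
    have hFc : HasCompactSupport F := hφc.mul_left
    have hFc1 : ContDiff ℝ 1 F := by
      have : ContDiff ℝ 1 u := by
        have h : u = fun y : ℝ => (y ^ 2 + 1)⁻¹ := funext hu
        rw [h]
        exact ContDiff.inv (by fun_prop) (fun x => by positivity)
      exact this.mul hφ1
    have hderivF : deriv F = fun x => g x * φ x + u x * deriv φ x :=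
      funext fun x => (hFd x).deriv
    have hint1 : Integrable (fun x => g x * φ x) volume :=
      ((hgc.mul hφcont)).integrable_of_hasCompactSupport hφc.mul_left
    have hint2 : Integrable (fun x => u x * deriv φ x) volume :=
      ((huc.mul hφ')).integrable_of_hasCompactSupport hφ'c.mul_left
    have hzero : ∫ x, deriv F x = 0 := by
      have hIic := hFc.integral_Iic_deriv_eq hFc1 0
      have hIoi := hFc.integral_Ioi_deriv_eq hFc1 0
      have hintF : Integrable (deriv F) volume := by
        rw [hderivF]; exact hint1.add hint2
      have := intervalIntegral.integral_Iic_add_Ioi (b := (0:ℝ)) hintF.integrableOn hintF.integrableOn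
      rw [hIic, hIoi] at this
      linarith [this.symm]
    rw [hderivF] at hzero
    rw [integral_add hint1 hint2] at hzero
    linarith
  · -- non-integrability
    intro h
    have hconst : Integrable (fun _ : ℝ => (1/2 : ℝ)) volume := by
      apply h.mono (aestronglyMeasurable_const)
      filter_upwards with x
      have h0 : (0:ℝ) < x ^ 2 + 1 := by positivity
      rw [hV x, hu x, Real.norm_eq_abs, Real.norm_eq_abs,
        abs_of_nonneg (show (0:ℝ) ≤ 1/2 by norm_num),
        abs_of_nonneg (show (0:ℝ) ≤ (x ^ 4 + 1) * ((x ^ 2 + 1)⁻¹) ^ 2 by positivity),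
        inv_pow, ← div_eq_mul_inv, le_div_iff₀ (by positivity)]
      nlinarith [sq_nonneg (x ^ 2 - 1)]
    rw [integrable_const_iff] at hconst
    rcases hconst with h' | h'
    · norm_num at h'
    · exact absurd h'.measure_univ_lt_top (by simp)

end
end

section
/- (Bounded Palais–Smale sequences for monotone families, variant of Jeanjean's theorem) Let X be a real Banach space, I ⊂ (0,∞) a nonempty open interval, and for ρ ∈ I let G_ρ(u) = ρA(u) − B(u) with A, B : X → ℝ of class C¹, A ≥ 0, A ≢ 0, and either A(u) → ∞ or B(u) → ∞ as ‖u‖ → ∞. Suppose there are u₁, u₂ ∈ X such that, with Γ the set of continuous paths from u₁ to u₂, c(ρ) := inf_{ξ∈Γ} max_{t∈[0,1]} G_ρ(ξ(t)) > max{G_ρ(u₁), G_ρ(u₂)} for every ρ ∈ I. Then for almost every ρ ∈ I there exists a bounded sequence (u_n) ⊂ X with G_ρ(u_n) → c(ρ) and G'_ρ(u_n) → 0 in X*. -/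
/-!
Since `A ≥ 0`, the level `c` is nondecreasing in `ρ`, hence differentiable at almost every `ρ`;
there `c (ρ + h) ≤ c ρ + K h` for small `h > 0`. Take a path that is almost optimal for
`G_{ρ+h}`. Along it `G_ρ ≤ c ρ + (K + 1) h`, and wherever `G_ρ ≥ c ρ - 2h` we get
`h A = G_{ρ+h} - G_ρ ≤ (K + 3) h`, so by coercivity this high part of the path stays in a ball
independent of `h`. Ekeland's principle, for the maximum of `G_ρ` on the paths that agree with
this one on its low part, moves it by at most `√((K + 1) h)` to a path with a point on its high
part where `‖G_ρ'‖ ≤ 4 √((K + 1) h)`: otherwise a pseudo-gradient deformation would lower the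
maximum faster than Ekeland's inequality allows. Letting `h → 0` gives the bounded Palais–Smale
sequence.
-/

open MeasureTheory Filter Topology

noncomputable section

open Set Metric

section Ekeland

variable {E : Type*} [MetricSpace E] {Φ : E → ℝ} {a : ℝ}

def ekelandSet (Φ : E → ℝ) (a : ℝ) (y : E) : Set E := {x | Φ x + a * dist x y ≤ Φ y}

theorem mem_ekelandSet_self (y : E) : y ∈ ekelandSet Φ a y := by simp [ekelandSet]

theorem ekelandSet_trans (ha : 0 ≤ a) {x y z : E} (hxy : x ∈ ekelandSet Φ a y)
    (hyz : y ∈ ekelandSet Φ a z) : x ∈ ekelandSet Φ a z := by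
  simp only [ekelandSet, mem_ofPred_eq] at *
  nlinarith [dist_triangle x y z]

theorem exists_antitone_ekelandSet (hbdd : BddBelow (range Φ)) (ha : 0 < a) (x₀ : E) :
    ∃ x : ℕ → E, x 0 = x₀ ∧ Antitone (fun n => ekelandSet Φ a (x n)) ∧
      ∀ n : ℕ, ekelandSet Φ a (x (n + 1)) ⊆ closedBall (x (n + 1)) (1 / (n + 1)) := by
  obtain ⟨m, hm⟩ := hbdd
  have step (n : ℕ) (y : E) :
      ∃ x ∈ ekelandSet Φ a y, ∀ z ∈ ekelandSet Φ a y, Φ x < Φ z + a / (n + 1) := by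
    obtain ⟨_, ⟨x, hx, rfl⟩, hlt⟩ :=
      Real.lt_sInf_add_pos ((nonempty_of_mem (mem_ekelandSet_self y)).image Φ)
        (by positivity : 0 < a / (n + 1))
    refine ⟨x, hx, fun z hz => hlt.trans_le ?_⟩
    gcongr
    exact csInf_le ⟨m, by rintro _ ⟨w, -, rfl⟩; exact hm ⟨w, rfl⟩⟩ (mem_image_of_mem Φ hz)
  choose f hfS hfΦ using step
  let x : ℕ → E := fun n => Nat.rec x₀ f n
  have anti : Antitone fun n => ekelandSet Φ a (x n) :=
    antitone_nat_of_succ_le fun n z hz => ekelandSet_trans ha.le hz (hfS n (x n))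
  refine ⟨x, rfl, anti, fun n z hz => ?_⟩
  have h1 := hfΦ n (x n) z (anti n.le_succ hz)
  have h2 : Φ z + a * dist z (f n (x n)) ≤ Φ (f n (x n)) := hz
  have h3 : a * dist z (x (n + 1)) ≤ a * (1 / (n + 1)) := by
    rw [mul_one_div]; exact le_of_lt (by linarith)
  exact le_of_mul_le_mul_left h3 ha

theorem exists_ekeland_point [CompleteSpace E] (hΦ : LowerSemicontinuous Φ)
    (hbdd : BddBelow (range Φ)) (ha : 0 < a) (x₀ : E) :
    ∃ γ, Φ γ + a * dist γ x₀ ≤ Φ x₀ ∧ ∀ η, Φ γ ≤ Φ η + a * dist η γ := by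
  obtain ⟨x, rfl, anti, small⟩ := exists_antitone_ekelandSet hbdd ha x₀
  have closed (y : E) : IsClosed (ekelandSet Φ a y) :=
    (hΦ.add (continuous_const.mul (continuous_id.dist continuous_const)).lowerSemicontinuous)
      |>.isClosed_preimage (Φ y)
  have radius : Tendsto (fun n : ℕ => 2 * (1 / ((n : ℝ) + 1))) atTop (𝓝 0) := by
    simpa using tendsto_one_div_add_atTop_nhds_zero_nat.const_mul (2 : ℝ)
  obtain ⟨γ, hγ⟩ : (⋂ n, ekelandSet Φ a (x (n + 1))).Nonempty := by
    refine nonempty_iInter_of_nonempty_biInter (fun n => closed _)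
      (fun n => isBounded_closedBall.subset (small n)) (fun N => ⟨x (N + 1), ?_⟩) ?_
    · exact mem_iInter₂.2 fun n hn => anti (show n + 1 ≤ N + 1 by omega) (mem_ekelandSet_self _)
    · refine squeeze_zero (fun n => diam_nonneg) (fun n => ?_) radius
      exact (diam_mono (small n) isBounded_closedBall).trans (diam_closedBall (by positivity))
  rw [mem_iInter] at hγ
  refine ⟨γ, anti (Nat.zero_le 1) (hγ 0), fun η => ?_⟩
  by_contra! hlt
  have hη (n : ℕ) : η ∈ ekelandSet Φ a (x (n + 1)) := ekelandSet_trans ha.le hlt.le (hγ n)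
  have : dist η γ ≤ 0 := by
    refine ge_of_tendsto' radius fun n => ?_
    calc dist η γ ≤ dist η (x (n + 1)) + dist γ (x (n + 1)) := dist_triangle_right _ _ _
      _ ≤ 1 / (n + 1) + 1 / (n + 1) := add_le_add (small n (hη n)) (small n (hγ n))
      _ = 2 * (1 / (n + 1)) := by ring
  rw [dist_le_zero.1 this, dist_self, mul_zero, add_zero] at hlt
  exact lt_irrefl _ hlt

end Ekeland

theorem le_ciSup_comp {T Y : Type*} [TopologicalSpace T] [CompactSpace T] [TopologicalSpace Y]
    {G : Y → ℝ} (hG : Continuous G) (γ : C(T, Y)) (t : T) : G (γ t) ≤ ⨆ s, G (γ s) :=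
  le_ciSup (isCompact_range (hG.comp γ.continuous)).bddAbove t

section Deformation

variable {X : Type*} [NormedAddCommGroup X] [NormedSpace ℝ X]

theorem ContinuousLinearMap.exists_norm_le_one_lt_apply (f : X →L[ℝ] ℝ) {δ : ℝ} (hδ : δ < ‖f‖) :
    ∃ v, ‖v‖ ≤ 1 ∧ δ < f v := by
  obtain ⟨v, hv, hδv⟩ := f.exists_lt_apply_of_lt_opNorm hδ
  rcases le_or_gt 0 (f v) with hpos | hneg
  · exact ⟨v, hv.le, by rwa [Real.norm_eq_abs, abs_of_nonneg hpos] at hδv⟩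
  · refine ⟨-v, by rw [norm_neg]; exact hv.le, ?_⟩
    rwa [Real.norm_eq_abs, abs_of_neg hneg, ← map_neg] at hδv

theorem add_mul_le_of_le_fderiv_segment {G : X → ℝ} {G' : X → X →L[ℝ] ℝ}
    (hG : ∀ u, HasFDerivAt G (G' u) u) {u w : X} {s a : ℝ} (hs : 0 ≤ s)
    (ha : ∀ τ ∈ Icc 0 s, a ≤ G' (u - τ • w) w) : G (u - s • w) + s * a ≤ G u := by
  have hderiv : ∀ τ, HasDerivAt (fun τ : ℝ => G (u - τ • w)) (-G' (u - τ • w) w) τ := by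
    intro τ
    have := (hG _).comp_hasDerivAt τ (by simpa using ((hasDerivAt_id τ).smul_const w).const_sub u)
    rwa [map_neg] at this
  have := (convex_Icc 0 s).image_sub_le_mul_sub_of_deriv_le
    (fun τ _ => (hderiv τ).continuousAt.continuousWithinAt)
    (fun τ _ => (hderiv τ).differentiableAt.differentiableWithinAt)
    (fun τ hτ => (hderiv τ).deriv.trans_le (neg_le_neg (ha τ (interior_subset hτ))))
    0 (left_mem_Icc.2 hs) s (right_mem_Icc.2 hs) hs
  simp only [zero_smul, sub_zero] at this
  linarith

variable {T : Type*} [MetricSpace T] [CompactSpace T] {G : X → ℝ} {G' : X → X →L[ℝ] ℝ}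

theorem exists_descent_field {L : X → X →L[ℝ] ℝ} (hL : Continuous L) (γ : C(T, X))
    {K : Set T} (hK : IsClosed K) {δ : ℝ} (hδ : ∀ t ∈ K, δ < ‖L (γ t)‖) :
    ∃ W : C(T, X), (∀ t, ‖W t‖ ≤ 1) ∧
      ∃ r > 0, ∀ t ∈ K, ∀ y, dist y (γ t) < r → δ < L y (W t) := by
  obtain ⟨W, hW⟩ : ∃ W : C(T, X), ∀ t, W t ∈ closedBall 0 1 ∩ {w | t ∈ K → δ < L (γ t) w} := by
    refine exists_continuous_forall_mem_convex_of_local_const (fun t => ?_) (fun t => ?_)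
    · refine (convex_closedBall 0 1).inter ?_
      by_cases ht : t ∈ K
      · simpa only [ht, true_imp_iff] using
          convex_halfSpace_gt (f := fun w => L (γ t) w) ⟨map_add _, map_smul _⟩ δ
      · simp only [ht, false_imp_iff, ofPred_true]
        exact convex_univ
    by_cases ht : t ∈ K
    · obtain ⟨v, hv, hδv⟩ := (L (γ t)).exists_norm_le_one_lt_apply (hδ t ht)
      have : ∀ᶠ s in 𝓝 t, δ < L (γ s) v :=
        ((hL.comp γ.continuous).clm_apply continuous_const).continuousAt.eventually_const_lt hδv
      exact ⟨v, this.mono fun s hs => ⟨mem_closedBall_zero_iff.2 hv, fun _ => hs⟩⟩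
    · exact ⟨0, (hK.isOpen_compl.eventually_mem ht).mono fun s hs =>
        ⟨mem_closedBall_self zero_le_one, fun h => absurd h hs⟩⟩
  refine ⟨W, fun t => mem_closedBall_zero_iff.1 (hW t).1, ?_⟩
  have hopen : IsOpen {p : T × X | δ < L p.2 (W p.1)} :=
    isOpen_lt continuous_const
      ((hL.comp continuous_snd).clm_apply (W.continuous.comp continuous_fst))
  have hcpt : IsCompact ((fun t => (t, γ t)) '' K) :=
    hK.isCompact.image (continuous_id.prodMk γ.continuous)
  obtain ⟨r, hr, hsub⟩ := hcpt.exists_thickening_subset_open hopen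
    (image_subset_iff.2 fun t ht => (hW t).2 ht)
  refine ⟨r, hr, fun t ht y hy => show (t, y) ∈ {p : T × X | δ < L p.2 (W p.1)} from
    hsub (mem_thickening_iff.2 ⟨_, mem_image_of_mem _ ht, ?_⟩)⟩
  simpa [Prod.dist_eq] using hy

theorem exists_deformation_of_cutoff (hG : ∀ u, HasFDerivAt G (G' u) u) (hG' : Continuous G')
    (γ : C(T, X)) {K : Set T} (hK : IsClosed K) {δ : ℝ} (hδ : ∀ t ∈ K, δ < ‖G' (γ t)‖)
    {χ : T → ℝ} (hχ : Continuous χ) (hχ0 : ∀ t, 0 ≤ χ t) (hχ1 : ∀ t, χ t ≤ 1)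
    (hχK : ∀ t ∉ K, χ t = 0) :
    ∃ s₀ > 0, ∀ s ∈ Icc 0 s₀, ∃ η : C(T, X), dist η γ ≤ s ∧ (∀ t ∉ K, η t = γ t) ∧
      ∀ t, G (η t) + s * χ t * δ ≤ G (γ t) := by
  obtain ⟨W, hW1, r, hr, hWr⟩ := exists_descent_field hG' γ hK hδ
  refine ⟨r / 2, by positivity, fun s ⟨hs0, hsr⟩ => ?_⟩
  have hχW (t : T) : χ t * ‖W t‖ ≤ 1 := mul_le_one₀ (hχ1 t) (norm_nonneg _) (hW1 t)
  have hη (t : T) : γ t - (s * χ t) • W t = γ t - s • χ t • W t := by rw [mul_smul]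
  refine ⟨⟨fun t => γ t - (s * χ t) • W t, by fun_prop⟩, ?_, fun t ht => ?_, fun t => ?_⟩
  · refine (ContinuousMap.dist_le hs0).2 fun t => ?_
    rw [ContinuousMap.coe_mk, dist_self_sub_left, norm_smul,
      Real.norm_of_nonneg (mul_nonneg hs0 (hχ0 t)), mul_assoc]
    exact mul_le_of_le_one_right hs0 (hχW t)
  · simp [hχK t ht]
  · by_cases ht : t ∈ K
    · rw [ContinuousMap.coe_mk, hη, mul_assoc]
      refine add_mul_le_of_le_fderiv_segment hG hs0 fun τ ⟨hτ0, hτs⟩ => ?_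
      rw [map_smul, smul_eq_mul]
      refine mul_le_mul_of_nonneg_left (hWr t ht _ ?_).le (hχ0 t)
      rw [dist_self_sub_left, norm_smul, norm_smul, Real.norm_of_nonneg hτ0,
        Real.norm_of_nonneg (hχ0 t)]
      linarith [mul_le_of_le_one_right hτ0 (hχW t)]
    · simp [hχK t ht]

theorem exists_deformation_lowering_sup [Nonempty T] (hG : ∀ u, HasFDerivAt G (G' u) u)
    (hG' : Continuous G') (γ : C(T, X)) {c h δ : ℝ} (hh : 0 < h) (hδ : 0 < δ)
    (hcrit : ∀ t, c - h ≤ G (γ t) → δ < ‖G' (γ t)‖) (hc : c ≤ ⨆ t, G (γ t)) :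
    ∃ s > 0, ∃ η : C(T, X), dist η γ ≤ s ∧ (∀ t, G (γ t) < c - h → η t = γ t) ∧
      (⨆ t, G (η t)) + s * δ / 2 ≤ ⨆ t, G (γ t) := by
  have hGc : Continuous G := continuous_iff_continuousAt.2 fun u => (hG u).continuousAt
  set K := {t | c - h ≤ G (γ t)}
  have hK : IsClosed K := isClosed_le continuous_const (hGc.comp γ.continuous)
  -- the cut-off is `0` below level `c - h` and `1` above level `c`
  set χ : T → ℝ := fun t => max 0 (min 1 ((G (γ t) - (c - h)) / h))
  have hχ : Continuous χ := by fun_prop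
  have hχK (t) (ht : t ∉ K) : χ t = 0 := by
    have : (G (γ t) - (c - h)) / h ≤ 0 :=
      div_nonpos_of_nonpos_of_nonneg (by simp only [K, mem_ofPred_eq] at ht; linarith) hh.le
    exact max_eq_left ((min_le_right _ _).trans this)
  obtain ⟨s₀, hs₀, hdeform⟩ := exists_deformation_of_cutoff hG hG' γ hK (fun t ht => hcrit t ht)
    hχ (fun t => le_max_left _ _) (fun t => max_le zero_le_one (min_le_left _ _)) hχK
  -- `s δ ≤ h`: where `χ < 1 / 2`, `G ∘ γ < c - h / 2` already lies `s δ / 2` below the supremum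
  set s := min s₀ (h / δ)
  have hs : 0 < s := lt_min hs₀ (by positivity)
  have hsδ : s * δ ≤ h := by
    calc s * δ ≤ h / δ * δ := by gcongr; exact min_le_right _ _
      _ = h := div_mul_cancel₀ h hδ.ne'
  obtain ⟨η, hηγ, hηK, hηG⟩ := hdeform s ⟨hs.le, min_le_left _ _⟩
  refine ⟨s, hs, η, hηγ, fun t ht => hηK t (not_le.2 ht), ?_⟩
  rw [← le_sub_iff_add_le]
  refine ciSup_le fun t => ?_
  have hγt := le_ciSup_comp hGc γ t
  by_cases hχt : 1 / 2 ≤ χ t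
  · nlinarith [hηG t, mul_le_mul_of_nonneg_left hχt (mul_pos hs hδ).le]
  · have hlow : G (γ t) < c - h / 2 := by
      by_contra! hge
      refine hχt (le_max_of_le_right (le_min (by norm_num) ?_))
      rw [le_div_iff₀ hh]
      linarith
    nlinarith [hηG t, le_max_left 0 (min 1 ((G (γ t) - (c - h)) / h))]

theorem exists_almost_critical_near_path [Nonempty T] [CompleteSpace X]
    (hG : ∀ u, HasFDerivAt G (G' u) u) (hG' : Continuous G') (ξ : C(T, X)) {c h ε : ℝ}
    (hh : 0 < h) (hε : 0 < ε) (hξ : ∀ t, G (ξ t) ≤ c + ε)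
    (hlow : ∀ η : C(T, X), (∀ t, G (ξ t) ≤ c - 2 * h → η t = ξ t) → c ≤ ⨆ t, G (η t)) :
    ∃ γ : C(T, X), dist γ ξ ≤ √ε ∧ ∃ t, c - 2 * h < G (ξ t) ∧ c - h ≤ G (γ t) ∧
      G (γ t) ≤ c + ε ∧ ‖G' (γ t)‖ ≤ 4 * √ε := by
  have hGc : Continuous G := continuous_iff_continuousAt.2 fun u => (hG u).continuousAt
  set E := {η : C(T, X) | ∀ t, G (ξ t) ≤ c - 2 * h → η t = ξ t}
  have hE : IsClosed E := by
    simp only [E, ofPred_forall]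
    exact isClosed_iInter fun t => isClosed_iInter fun _ =>
      isClosed_eq (continuous_eval_const t) continuous_const
  have : CompleteSpace E := hE.completeSpace_coe
  set Φ : E → ℝ := fun η => ⨆ t, G (η.1 t)
  have hΦ : LowerSemicontinuous Φ := lowerSemicontinuous_ciSup
    (fun η => (isCompact_range (hGc.comp η.1.continuous)).bddAbove)
    fun t => (hGc.comp ((continuous_eval_const t).comp continuous_subtype_val)).lowerSemicontinuous
  have hΦc (η : E) : c ≤ Φ η := hlow η.1 η.2
  have hsqrt : 0 < √ε := Real.sqrt_pos.2 hε
  obtain ⟨γ, hγξ, hγmin⟩ := exists_ekeland_point hΦ ⟨c, by rintro _ ⟨η, rfl⟩; exact hΦc η⟩ hsqrt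
    (⟨ξ, fun _ _ => rfl⟩ : E)
  rw [Subtype.dist_eq] at hγξ
  have hΦξ : Φ ⟨ξ, fun _ _ => rfl⟩ ≤ c + ε := ciSup_le hξ
  have hdist : dist γ.1 ξ ≤ √ε := by
    refine le_of_mul_le_mul_left ?_ hsqrt
    rw [Real.mul_self_sqrt hε.le]
    linarith [hΦc γ]
  refine ⟨γ.1, hdist, ?_⟩
  by_contra! hcrit
  have hcrit' (t : T) (ht : c - h ≤ G (γ.1 t)) : 4 * √ε < ‖G' (γ.1 t)‖ := by
    refine hcrit t ?_ ht ?_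
    · by_contra! hle
      rw [γ.2 t hle] at ht
      linarith
    · linarith [le_ciSup_comp hGc γ.1 t, mul_nonneg hsqrt.le (dist_nonneg (x := γ.1) (y := ξ))]
  obtain ⟨s, hs, η, hηγ, hηfix, hηΦ⟩ :=
    exists_deformation_lowering_sup hG hG' γ.1 hh (by positivity) hcrit' (hΦc γ)
  have hηE : η ∈ E := fun t ht => by
    rw [hηfix t (by rw [γ.2 t ht]; linarith), γ.2 t ht]
  have hmin := hγmin ⟨η, hηE⟩
  rw [Subtype.dist_eq] at hmin
  nlinarith [mul_le_mul_of_nonneg_left hηγ hsqrt.le, mul_pos hs hsqrt]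

end Deformation

section MountainPass

variable {Y : Type*} [TopologicalSpace Y]

def mountainPassLevel (G : Y → ℝ) (u₁ u₂ : Y) : ℝ :=
  ⨅ γ : Path u₁ u₂, ⨆ t, G (γ t)

theorem sInf_sSup_image_eq_mountainPassLevel (G : Y → ℝ) (u₁ u₂ : Y) :
    sInf {m : ℝ | ∃ ξ : ℝ → Y, ContinuousOn ξ (Icc 0 1) ∧ ξ 0 = u₁ ∧ ξ 1 = u₂ ∧
      m = sSup ((fun t => G (ξ t)) '' Icc (0 : ℝ) 1)} = mountainPassLevel G u₁ u₂ := by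
  refine congrArg sInf (Set.ext fun m => ⟨?_, ?_⟩)
  · rintro ⟨ξ, hξ, h0, h1, rfl⟩
    exact ⟨⟨⟨(Icc 0 1).domRestrict ξ, hξ.domRestrict⟩, h0, h1⟩, by rw [sSup_image']; rfl⟩
  · rintro ⟨γ, rfl⟩
    refine ⟨γ.extend, γ.continuous_extend.continuousOn, γ.extend_zero, γ.extend_one, ?_⟩
    rw [sSup_image']
    simp only [Path.extend_extends']

variable {G H : Y → ℝ} {u₁ u₂ : Y}

theorem mountainPassLevel_le (hG : Continuous G) (γ : Path u₁ u₂) :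
    mountainPassLevel G u₁ u₂ ≤ ⨆ t, G (γ t) :=
  ciInf_le ⟨G u₁, by rintro _ ⟨γ, rfl⟩; simpa using le_ciSup_comp hG γ.toContinuousMap 0⟩ γ

theorem mountainPassLevel_mono [Nonempty (Path u₁ u₂)] (hG : Continuous G) (hH : Continuous H)
    (hGH : ∀ u, G u ≤ H u) : mountainPassLevel G u₁ u₂ ≤ mountainPassLevel H u₁ u₂ :=
  ciInf_mono ⟨G u₁, by rintro _ ⟨γ, rfl⟩; simpa using le_ciSup_comp hG γ.toContinuousMap 0⟩
    fun γ => ciSup_mono (isCompact_range (hH.comp γ.continuous)).bddAbove fun t => hGH _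

theorem exists_path_lt_of_mountainPassLevel_lt [Nonempty (Path u₁ u₂)] (hG : Continuous G)
    {a : ℝ} (ha : mountainPassLevel G u₁ u₂ < a) : ∃ γ : Path u₁ u₂, ∀ t, G (γ t) < a := by
  obtain ⟨γ, hγ⟩ := exists_lt_of_ciInf_lt ha
  exact ⟨γ, fun t => (le_ciSup_comp hG γ.toContinuousMap t).trans_lt hγ⟩

end MountainPass

theorem DifferentiableAt.exists_eventually_le_add_mul {f : ℝ → ℝ} {x : ℝ}
    (hf : DifferentiableAt ℝ f x) : ∃ K, 0 ≤ K ∧ ∀ᶠ h in 𝓝[>] 0, f (x + h) ≤ f x + K * h := by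
  have hslope := (hasDerivAt_iff_tendsto_slope_zero.1 hf.hasDerivAt).mono_left
    (nhdsWithin_mono 0 fun h (hh : 0 < h) => hh.ne')
  refine ⟨|deriv f x| + 1, by positivity, ?_⟩
  filter_upwards [hslope.eventually_lt_const (lt_of_le_of_lt (le_abs_self _) (lt_add_one _)),
    self_mem_nhdsWithin] with h hlt (hh : 0 < h)
  rw [smul_eq_mul, inv_mul_lt_iff₀ hh] at hlt
  linarith

section PalaisSmale

variable {X : Type*} [NormedAddCommGroup X]

theorem exists_seq_of_forall_approx {f g : X → ℝ} {c R : ℝ}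
    (h : ∀ ε > 0, ∃ u, ‖u‖ ≤ R ∧ |f u - c| ≤ ε ∧ g u ≤ ε) (hg : ∀ u, 0 ≤ g u) :
    ∃ u : ℕ → X, (∃ M, ∀ n, ‖u n‖ ≤ M) ∧ Tendsto (fun n => f (u n)) atTop (𝓝 c) ∧
      Tendsto (fun n => g (u n)) atTop (𝓝 0) := by
  choose u hR hf hg' using fun n : ℕ => h (1 / (n + 1)) (by positivity)
  refine ⟨u, ⟨R, hR⟩, ?_, squeeze_zero (fun n => hg _) hg' tendsto_one_div_add_atTop_nhds_zero_nat⟩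
  exact tendsto_sub_nhds_zero_iff.1
    (squeeze_zero_norm (fun n => (hf n).trans_eq' (Real.norm_eq_abs _))
      tendsto_one_div_add_atTop_nhds_zero_nat)

theorem exists_norm_le_of_coercive {A B : X → ℝ} (hApos : ∀ u, 0 ≤ A u)
    (hcoercive : (∀ M : ℝ, ∃ R : ℝ, ∀ u : X, R ≤ ‖u‖ → M ≤ A u) ∨
                 (∀ M : ℝ, ∃ R : ℝ, ∀ u : X, R ≤ ‖u‖ → M ≤ B u)) (ρ a b : ℝ) :
    ∃ M, ∀ u, A u ≤ a → b ≤ ρ * A u - B u → ‖u‖ ≤ M := by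
  rcases hcoercive with hco | hco
  · obtain ⟨R, hR⟩ := hco (a + 1)
    exact ⟨R, fun u hA _ => le_of_not_ge fun hu => by linarith [hR u hu]⟩
  · obtain ⟨R, hR⟩ := hco (|ρ| * a - b + 1)
    refine ⟨R, fun u hA hB => le_of_not_ge fun hu => ?_⟩
    have : ρ * A u ≤ |ρ| * a :=
      (mul_le_mul_of_nonneg_right (le_abs_self ρ) (hApos u)).trans
        (mul_le_mul_of_nonneg_left hA (abs_nonneg ρ))
    linarith [hR u hu]

variable [NormedSpace ℝ X] [CompleteSpace X] {A B : X → ℝ} {A' B' : X → X →L[ℝ] ℝ} {u₁ u₂ : X}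

theorem exists_almost_critical_of_mountainPassLevel_le (hA : ∀ u, HasFDerivAt A (A' u) u)
    (hA' : Continuous A') (hB : ∀ u, HasFDerivAt B (B' u) u) (hB' : Continuous B')
    (hApos : ∀ u, 0 ≤ A u) {ρ h K M : ℝ} (hh : 0 < h) (hh1 : h ≤ 1) (hK : 0 ≤ K)
    (hend : max (ρ * A u₁ - B u₁) (ρ * A u₂ - B u₂) ≤
      mountainPassLevel (fun u => ρ * A u - B u) u₁ u₂ - 2 * h)
    (hslope : mountainPassLevel (fun u => (ρ + h) * A u - B u) u₁ u₂ ≤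
      mountainPassLevel (fun u => ρ * A u - B u) u₁ u₂ + K * h)
    (hM : ∀ u, A u ≤ K + 3 →
      mountainPassLevel (fun u => ρ * A u - B u) u₁ u₂ - 2 ≤ ρ * A u - B u → ‖u‖ ≤ M) :
    ∃ u, ‖u‖ ≤ M + √((K + 1) * h) ∧
      mountainPassLevel (fun u => ρ * A u - B u) u₁ u₂ - h ≤ ρ * A u - B u ∧
      ρ * A u - B u ≤ mountainPassLevel (fun u => ρ * A u - B u) u₁ u₂ + (K + 1) * h ∧
      ‖ρ • A' u - B' u‖ ≤ 4 * √((K + 1) * h) := by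
  set c := mountainPassLevel (fun u => ρ * A u - B u) u₁ u₂
  have hAc : Continuous A := continuous_iff_continuousAt.2 fun u => (hA u).continuousAt
  have hBc : Continuous B := continuous_iff_continuousAt.2 fun u => (hB u).continuousAt
  have : Nonempty (Path u₁ u₂) := ⟨(IsTopologicalAddGroup.pathConnectedSpace.joined u₁ u₂).somePath⟩
  obtain ⟨ξ, hξ⟩ := exists_path_lt_of_mountainPassLevel_lt
    (G := fun u => (ρ + h) * A u - B u) (by fun_prop)
    (show _ < c + (K + 1) * h by linarith)
  have hξρ (t) : ρ * A (ξ t) - B (ξ t) ≤ c + (K + 1) * h := by nlinarith [hξ t, hApos (ξ t)]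
  have hlow (η : C(unitInterval, X)) (hη : ∀ t, ρ * A (ξ t) - B (ξ t) ≤ c - 2 * h → η t = ξ t) :
      c ≤ ⨆ t, ρ * A (η t) - B (η t) := by
    have h0 : η 0 = u₁ := (hη 0 (by simpa using (le_max_left _ _).trans hend)).trans ξ.source
    have h1 : η 1 = u₂ := (hη 1 (by simpa using (le_max_right _ _).trans hend)).trans ξ.target
    exact mountainPassLevel_le (G := fun u => ρ * A u - B u) (by fun_prop) ⟨η, h0, h1⟩
  obtain ⟨γ, hγξ, t, hξt, hγt, hγt', hγcrit⟩ := exists_almost_critical_near_path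
    (G := fun u => ρ * A u - B u) (fun u => ((hA u).const_mul ρ).sub (hB u))
    ((hA'.const_smul ρ).sub hB') (ξ : C(unitInterval, X)) hh (by positivity) hξρ hlow
  simp only [ContinuousMap.coe_coe] at hξt
  refine ⟨γ t, ?_, hγt, hγt', hγcrit⟩
  -- at `ξ t`, `h A = G_{ρ+h} - G_ρ < (c + (K + 1) h) - (c - 2 h)`
  have hAξ : A (ξ t) ≤ K + 3 := le_of_mul_le_mul_left (by nlinarith [hξ t]) hh
  calc ‖γ t‖ ≤ ‖ξ t‖ + dist (γ t) (ξ t) := by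
        rw [dist_eq_norm]; exact norm_le_norm_add_norm_sub' _ _
    _ ≤ M + √((K + 1) * h) := add_le_add (hM _ hAξ (by linarith))
        ((ContinuousMap.dist_apply_le_dist t).trans hγξ)

theorem exists_bounded_palaisSmale_seq (hA : ∀ u, HasFDerivAt A (A' u) u)
    (hA' : Continuous A') (hB : ∀ u, HasFDerivAt B (B' u) u) (hB' : Continuous B')
    (hApos : ∀ u, 0 ≤ A u)
    (hcoercive : (∀ M : ℝ, ∃ R : ℝ, ∀ u : X, R ≤ ‖u‖ → M ≤ A u) ∨
                 (∀ M : ℝ, ∃ R : ℝ, ∀ u : X, R ≤ ‖u‖ → M ≤ B u))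
    {ρ K : ℝ} (hK : 0 ≤ K)
    (hmp : max (ρ * A u₁ - B u₁) (ρ * A u₂ - B u₂) <
      mountainPassLevel (fun u => ρ * A u - B u) u₁ u₂)
    (hslope : ∀ᶠ h in 𝓝[>] 0, mountainPassLevel (fun u => (ρ + h) * A u - B u) u₁ u₂ ≤
      mountainPassLevel (fun u => ρ * A u - B u) u₁ u₂ + K * h) :
    ∃ u : ℕ → X, (∃ M : ℝ, ∀ n, ‖u n‖ ≤ M) ∧
      Tendsto (fun n => ρ * A (u n) - B (u n)) atTop
        (𝓝 (mountainPassLevel (fun u => ρ * A u - B u) u₁ u₂)) ∧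
      Tendsto (fun n => ‖ρ • A' (u n) - B' (u n)‖) atTop (𝓝 0) := by
  set c := mountainPassLevel (fun u => ρ * A u - B u) u₁ u₂
  obtain ⟨M, hM⟩ := exists_norm_le_of_coercive hApos hcoercive ρ (K + 3) (c - 2)
  refine exists_seq_of_forall_approx (f := fun u => ρ * A u - B u)
    (g := fun u => ‖ρ • A' u - B' u‖) (R := M + 1)
    (fun ε hε => ?_) fun _ => norm_nonneg _
  have hsmall {f : ℝ → ℝ} (hf : ContinuousAt f 0) {a : ℝ} (ha : f 0 < a) :
      ∀ᶠ h in 𝓝[>] 0, f h ≤ a :=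
    eventually_nhdsWithin_of_eventually_nhds ((hf.eventually_lt continuousAt_const ha).mono
      fun _ => le_of_lt)
  obtain ⟨h, hh, hh1, hgap, hsl, hsqrt1, hsqrtε, hlinε⟩ := (eventually_mem_nhdsWithin.and <|
    (hsmall (f := id) continuousAt_id zero_lt_one).and <|
    (hsmall (f := fun h => max (ρ * A u₁ - B u₁) (ρ * A u₂ - B u₂) + 2 * h) (by fun_prop)
      (by simpa using hmp)).and <|
    hslope.and <|
    (hsmall (f := fun h => √((K + 1) * h)) (a := 1) (by fun_prop) (by simp)).and <|
    (hsmall (f := fun h => 4 * √((K + 1) * h)) (by fun_prop) (by simpa using hε)).and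
    (hsmall (f := fun h => (K + 1) * h) (by fun_prop) (by simpa using hε))).exists
  obtain ⟨u, hu, hlow, hup, hcrit⟩ := exists_almost_critical_of_mountainPassLevel_le hA hA' hB hB'
    hApos hh hh1 hK (by linarith) hsl hM
  refine ⟨u, by linarith, abs_le.2 ⟨by nlinarith, by linarith⟩, hcrit.trans hsqrtε⟩

end PalaisSmale

theorem statement18_general {X : Type*} [NormedAddCommGroup X] [NormedSpace ℝ X]
    [CompleteSpace X]
    (I : Set ℝ) (hIopen : IsOpen I)
    (A B : X → ℝ) (A' B' : X → X →L[ℝ] ℝ)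
    (hA : ∀ u, HasFDerivAt A (A' u) u) (hA' : Continuous A')
    (hB : ∀ u, HasFDerivAt B (B' u) u) (hB' : Continuous B')
    (hApos : ∀ u, 0 ≤ A u)
    (hcoercive : (∀ M : ℝ, ∃ R : ℝ, ∀ u : X, R ≤ ‖u‖ → M ≤ A u) ∨
                 (∀ M : ℝ, ∃ R : ℝ, ∀ u : X, R ≤ ‖u‖ → M ≤ B u))
    (u₁ u₂ : X) (c : ℝ → ℝ)
    -- `c(ρ)` is the mountain pass level over paths from `u₁` to `u₂`
    (hc : ∀ ρ : ℝ, c ρ = sInf {m : ℝ | ∃ ξ : ℝ → X,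
        ContinuousOn ξ (Set.Icc 0 1) ∧ ξ 0 = u₁ ∧ ξ 1 = u₂ ∧
        m = sSup ((fun t => ρ * A (ξ t) - B (ξ t)) '' Set.Icc (0 : ℝ) 1)})
    -- mountain pass geometry on all of `I`
    (hmp : ∀ ρ ∈ I, max (ρ * A u₁ - B u₁) (ρ * A u₂ - B u₂) < c ρ) :
    -- for almost every `ρ ∈ I`, a bounded Palais–Smale sequence at level `c(ρ)`
    ∀ᵐ ρ ∂((volume : Measure ℝ).restrict I),
      ∃ u : ℕ → X,
        (∃ M : ℝ, ∀ n, ‖u n‖ ≤ M) ∧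
        Tendsto (fun n => ρ * A (u n) - B (u n)) atTop (𝓝 (c ρ)) ∧
        Tendsto (fun n => ‖ρ • A' (u n) - B' (u n)‖) atTop (𝓝 0) := by
  obtain rfl : c = fun ρ => mountainPassLevel (fun u => ρ * A u - B u) u₁ u₂ :=
    funext fun ρ =>
      (hc ρ).trans (sInf_sSup_image_eq_mountainPassLevel (fun u => ρ * A u - B u) u₁ u₂)
  have hAc : Continuous A := continuous_iff_continuousAt.2 fun u => (hA u).continuousAt
  have hBc : Continuous B := continuous_iff_continuousAt.2 fun u => (hB u).continuousAt
  have : Nonempty (Path u₁ u₂) := ⟨(IsTopologicalAddGroup.pathConnectedSpace.joined u₁ u₂).somePath⟩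
  have hmono : Monotone fun ρ => mountainPassLevel (fun u => ρ * A u - B u) u₁ u₂ :=
    fun ρ₁ ρ₂ hρ => mountainPassLevel_mono (by fun_prop) (by fun_prop)
      fun u => by nlinarith [hApos u]
  rw [ae_restrict_iff' hIopen.measurableSet]
  filter_upwards [hmono.ae_differentiableAt] with ρ hdiff hρI
  obtain ⟨K, hK, hslope⟩ := hdiff.exists_eventually_le_add_mul
  exact exists_bounded_palaisSmale_seq hA hA' hB hB' hApos hcoercive hK (hmp ρ hρI) hslope

/-- **bounded Palais–Smale sequences for monotone families, a variant of
Jeanjean's theorem.** Let `X` be a real Banach space, `I ⊂ (0,∞)` a nonempty open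
interval, `G_ρ = ρA − B` with `A, B ∈ C¹(X;ℝ)`, `A ≥ 0`, `A ≢ 0`, and `A` or `B`
coercive. If `G_ρ` has uniform mountain pass geometry on `I` with mountain pass level
`c(ρ)`, then for almost every `ρ ∈ I` the functional `G_ρ` admits a bounded
Palais–Smale sequence at level `c(ρ)`. -/
theorem statement18 {X : Type*} [NormedAddCommGroup X] [NormedSpace ℝ X]
    [CompleteSpace X]
    (I : Set ℝ) (hIopen : IsOpen I) (hIne : I.Nonempty) (hIpos : I ⊆ Set.Ioi (0 : ℝ))
    (hIconn : I.OrdConnected)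
    (A B : X → ℝ) (A' B' : X → X →L[ℝ] ℝ)
    (hA : ∀ u, HasFDerivAt A (A' u) u) (hA' : Continuous A')
    (hB : ∀ u, HasFDerivAt B (B' u) u) (hB' : Continuous B')
    (hApos : ∀ u, 0 ≤ A u) (hAne : ∃ u, A u ≠ 0)
    (hcoercive : (∀ M : ℝ, ∃ R : ℝ, ∀ u : X, R ≤ ‖u‖ → M ≤ A u) ∨
                 (∀ M : ℝ, ∃ R : ℝ, ∀ u : X, R ≤ ‖u‖ → M ≤ B u))
    (u₁ u₂ : X) (c : ℝ → ℝ)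
    -- `c(ρ)` is the mountain pass level over paths from `u₁` to `u₂`
    (hc : ∀ ρ : ℝ, c ρ = sInf {m : ℝ | ∃ ξ : ℝ → X,
        ContinuousOn ξ (Set.Icc 0 1) ∧ ξ 0 = u₁ ∧ ξ 1 = u₂ ∧
        m = sSup ((fun t => ρ * A (ξ t) - B (ξ t)) '' Set.Icc (0 : ℝ) 1)})
    -- mountain pass geometry on all of `I`
    (hmp : ∀ ρ ∈ I, max (ρ * A u₁ - B u₁) (ρ * A u₂ - B u₂) < c ρ) :
    -- for almost every `ρ ∈ I`, a bounded Palais–Smale sequence at level `c(ρ)`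
    ∀ᵐ ρ ∂((volume : Measure ℝ).restrict I),
      ∃ u : ℕ → X,
        (∃ M : ℝ, ∀ n, ‖u n‖ ≤ M) ∧
        Tendsto (fun n => ρ * A (u n) - B (u n)) atTop (𝓝 (c ρ)) ∧
        Tendsto (fun n => ‖ρ • A' (u n) - B' (u n)‖) atTop (𝓝 0) :=
  statement18_general I hIopen A B A' B' hA hA' hB hB' hApos hcoercive u₁ u₂ c hc hmp

end
end
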